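/- Under the same hypotheses (Ω ∈ A²_{k₁,k₂}), the number of vertices of the dilatation Ω^e_{k₁,k₂} equals (k₁+2)(k₂+2)f₂ − (k₁+2)(k₂+1)f₁^{h,0} − (k₂+2)(k₁+1)f₁^{v,0} + (k₁+1)(k₂+1)f₀⁰. -/
import Mathlib


open Set

noncomputable section

/-- Cells of the planar integer grid, indexed by their lower-left corner. -/
def cellZ (p : ℤ × ℤ) : Set (ℝ × ℝ) :=
  Set.Icc (p.1 : ℝ) (p.1 + 1) ×ˢ Set.Icc (p.2 : ℝ) (p.2 + 1)

/-- The planar domain formed by the cells with indices in `S`. -/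
def cellU (S : Finset (ℤ × ℤ)) : Set (ℝ × ℝ) := ⋃ p ∈ S, cellZ p

/-- The domain is a topological 2-manifold with boundary: no two cells meet only
at a corner (the inadmissible vertex configurations are excluded). -/
def ManifoldLike (S : Finset (ℤ × ℤ)) : Prop :=
  ∀ i j : ℤ,
    ¬(((i - 1, j - 1) ∈ S ∧ (i, j) ∈ S ∧ (i - 1, j) ∉ S ∧ (i, j - 1) ∉ S) ∨
      ((i - 1, j) ∈ S ∧ (i, j - 1) ∈ S ∧ (i - 1, j - 1) ∉ S ∧ (i, j) ∉ S))

/-- The 1D admissibility class `A¹_k` for a set of cell indices: the number of cells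
strictly between two neighboring connected components exceeds `k`. -/
def Adm1 (k : ℤ) (A : Set ℤ) : Prop :=
  ∀ a b : ℤ, a ∈ A → b ∈ A → a < b → (∀ c : ℤ, a < c → c < b → c ∉ A) →
    b = a + 1 ∨ k < b - a - 1

/-- Horizontal slice (row) of a planar cell domain. -/
def row (S : Finset (ℤ × ℤ)) (j : ℤ) : Set ℤ := {i | (i, j) ∈ S}

/-- Vertical slice (column) of a planar cell domain. -/
def col (S : Finset (ℤ × ℤ)) (i : ℤ) : Set ℤ := {j | (i, j) ∈ S}

/-- Horizontal dilatation (combinatorially, on cell indices of the half-shifted grid). -/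
def hdil (S : Finset (ℤ × ℤ)) : Finset (ℤ × ℤ) :=
  S ∪ S.image (fun p => (p.1 + 1, p.2))

/-- Vertical dilatation. -/
def vdil (S : Finset (ℤ × ℤ)) : Finset (ℤ × ℤ) :=
  S ∪ S.image (fun p => (p.1, p.2 + 1))

/-- The dilatation `Ω^e_{k₁,k₂}` (cell indices w.r.t. the suitably half-shifted grid). -/
def dil (S : Finset (ℤ × ℤ)) (k₁ k₂ : ℕ) : Finset (ℤ × ℤ) :=
  hdil^[k₁] (vdil^[k₂] S)

/-- `Ω` admits a horizontal offset at distance 1/2: all rows `H(Ω)` and the consecutive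
unions `σH(Ω)` are in `A¹₁`. -/
def rowAdmissible (S : Finset (ℤ × ℤ)) : Prop :=
  ∀ j : ℤ, Adm1 1 (row S j) ∧ Adm1 1 (row S j ∪ row S (j + 1))

/-- `Ω` admits a vertical offset at distance 1/2. -/
def colAdmissible (S : Finset (ℤ × ℤ)) : Prop :=
  ∀ i : ℤ, Adm1 1 (col S i) ∧ Adm1 1 (col S i ∪ col S (i + 1))

/-- The class `A²_{1,0}`. -/
def A210 (S : Finset (ℤ × ℤ)) : Prop := ManifoldLike S ∧ rowAdmissible S

/-- The class `A²_{0,1}`. -/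
def A201 (S : Finset (ℤ × ℤ)) : Prop := ManifoldLike S ∧ colAdmissible S

/-- The admissibility classes `A²_{k₁,k₂}`, defined inductively. -/
def A2 : ℕ → ℕ → Finset (ℤ × ℤ) → Prop
  | 0, 0, S => ManifoldLike S
  | k₁ + 1, k₂, S => A2 k₁ k₂ S ∧ A210 (dil S k₁ k₂)
  | 0, k₂ + 1, S => A2 0 k₂ S ∧ A201 (dil S 0 k₂)

/-- Horizontal inner edges (indexed by their left endpoint `(i,j)`: the edge from
`(i,j)` to `(i+1,j)`, inner iff the cells above and below are both present). -/
def innerH (S : Finset (ℤ × ℤ)) : Set (ℤ × ℤ) :=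
  {p | (p.1, p.2) ∈ S ∧ (p.1, p.2 - 1) ∈ S}

/-- Vertical inner edges. -/
def innerV (S : Finset (ℤ × ℤ)) : Set (ℤ × ℤ) :=
  {p | (p.1, p.2) ∈ S ∧ (p.1 - 1, p.2) ∈ S}

/-- Horizontal edges of the domain. -/
def edgesH (S : Finset (ℤ × ℤ)) : Set (ℤ × ℤ) :=
  {p | (p.1, p.2) ∈ S ∨ (p.1, p.2 - 1) ∈ S}

/-- Vertical edges of the domain. -/
def edgesV (S : Finset (ℤ × ℤ)) : Set (ℤ × ℤ) :=
  {p | (p.1, p.2) ∈ S ∨ (p.1 - 1, p.2) ∈ S}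

/-- Vertices of the domain. -/
def verts (S : Finset (ℤ × ℤ)) : Set (ℤ × ℤ) :=
  {p | (p.1, p.2) ∈ S ∨ (p.1 - 1, p.2) ∈ S ∨ (p.1, p.2 - 1) ∈ S ∨ (p.1 - 1, p.2 - 1) ∈ S}

/-- Inner vertices of the domain. -/
def innerVert (S : Finset (ℤ × ℤ)) : Set (ℤ × ℤ) :=
  {p | (p.1, p.2) ∈ S ∧ (p.1 - 1, p.2) ∈ S ∧ (p.1, p.2 - 1) ∈ S ∧ (p.1 - 1, p.2 - 1) ∈ S}

/-! ### Auxiliary machinery -/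

/-- Shift of a planar set by the vector `(a, b)`. -/
def sh (a b : ℤ) (A : Set (ℤ × ℤ)) : Set (ℤ × ℤ) := {p | (p.1 - a, p.2 - b) ∈ A}

lemma mem_sh {a b : ℤ} {A : Set (ℤ × ℤ)} {p : ℤ × ℤ} :
    p ∈ sh a b A ↔ (p.1 - a, p.2 - b) ∈ A := Iff.rfl

lemma sh_eq_image (a b : ℤ) (A : Set (ℤ × ℤ)) :
    sh a b A = (fun p : ℤ × ℤ => (p.1 + a, p.2 + b)) '' A := by
  ext ⟨i, j⟩
  simp only [sh, Set.mem_setOf_eq, Set.mem_image, Prod.mk.injEq, Prod.exists]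
  constructor
  · intro h
    exact ⟨i - a, j - b, h, by omega, by omega⟩
  · rintro ⟨x, y, hx, h1, h2⟩
    have hx1 : x = i - a := by omega
    have hy1 : y = j - b := by omega
    rw [hx1, hy1] at hx
    exact hx

lemma shift_inj (a b : ℤ) : Function.Injective (fun p : ℤ × ℤ => (p.1 + a, p.2 + b)) := by
  rintro ⟨x, y⟩ ⟨u, v⟩ h
  simp only [Prod.mk.injEq] at h
  obtain ⟨h1, h2⟩ := h
  simp only [Prod.mk.injEq]
  omega

lemma sh_finite {A : Set (ℤ × ℤ)} (a b : ℤ) (hA : A.Finite) : (sh a b A).Finite := by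
  rw [sh_eq_image]; exact hA.image _

lemma sh_ncard (a b : ℤ) (A : Set (ℤ × ℤ)) : (sh a b A).ncard = A.ncard := by
  rw [sh_eq_image]; exact Set.ncard_image_of_injective _ (shift_inj a b)

/-- The basic "smearing" count. -/
lemma smear {A : Set (ℤ × ℤ)} (a b : ℤ) (hA : A.Finite) :
    (A ∪ sh a b A).ncard + (A ∩ sh a b A).ncard = 2 * A.ncard := by
  rw [Set.ncard_union_add_ncard_inter _ _ hA (sh_finite a b hA), sh_ncard]
  ring
/-! ### Structural set identities -/

lemma innerV_eq (T : Finset (ℤ × ℤ)) : innerV T = ↑T ∩ sh 1 0 (↑T : Set (ℤ × ℤ)) := by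
  ext ⟨i, j⟩
  simp [innerV, sh]

lemma innerH_eq (T : Finset (ℤ × ℤ)) : innerH T = ↑T ∩ sh 0 1 (↑T : Set (ℤ × ℤ)) := by
  ext ⟨i, j⟩
  simp [innerH, sh]

lemma edgesV_eq (T : Finset (ℤ × ℤ)) : edgesV T = ↑T ∪ sh 1 0 (↑T : Set (ℤ × ℤ)) := by
  ext ⟨i, j⟩
  simp [edgesV, sh]

lemma edgesH_eq (T : Finset (ℤ × ℤ)) : edgesH T = ↑T ∪ sh 0 1 (↑T : Set (ℤ × ℤ)) := by
  ext ⟨i, j⟩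
  simp [edgesH, sh]

lemma verts_eq (T : Finset (ℤ × ℤ)) : verts T = edgesV T ∪ sh 0 1 (edgesV T) := by
  ext ⟨i, j⟩
  simp [verts, edgesV, sh]
  tauto

lemma innerVert_eq (T : Finset (ℤ × ℤ)) :
    innerVert T = innerH T ∩ sh 1 0 (innerH T) := by
  ext ⟨i, j⟩
  simp [innerVert, innerH, sh]
  tauto

lemma finite_innerH (T : Finset (ℤ × ℤ)) : (innerH T).Finite := by
  rw [innerH_eq]; exact T.finite_toSet.inter_of_left _

lemma finite_innerV (T : Finset (ℤ × ℤ)) : (innerV T).Finite := by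
  rw [innerV_eq]; exact T.finite_toSet.inter_of_left _

lemma finite_innerVert (T : Finset (ℤ × ℤ)) : (innerVert T).Finite := by
  rw [innerVert_eq]; exact (finite_innerH T).inter_of_left _

lemma finite_edgesV (T : Finset (ℤ × ℤ)) : (edgesV T).Finite := by
  rw [edgesV_eq]; exact T.finite_toSet.union (sh_finite _ _ T.finite_toSet)

lemma finite_edgesH (T : Finset (ℤ × ℤ)) : (edgesH T).Finite := by
  rw [edgesH_eq]; exact T.finite_toSet.union (sh_finite _ _ T.finite_toSet)

lemma finite_verts (T : Finset (ℤ × ℤ)) : (verts T).Finite := by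
  rw [verts_eq]; exact (finite_edgesV T).union (sh_finite _ _ (finite_edgesV T))

lemma mem_hdil {T : Finset (ℤ × ℤ)} {p : ℤ × ℤ} :
    p ∈ hdil T ↔ ((p.1, p.2) ∈ T ∨ (p.1 - 1, p.2) ∈ T) := by
  obtain ⟨i, j⟩ := p
  simp only [hdil, Finset.mem_union, Finset.mem_image, Prod.mk.injEq, Prod.exists]
  constructor
  · rintro (h | ⟨x, y, hx, h1, h2⟩)
    · exact Or.inl h
    · right
      have hx1 : x = i - 1 := by omega
      have hy1 : y = j := by omega
      rw [hx1, hy1] at hx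
      exact hx
  · rintro (h | h)
    · exact Or.inl h
    · exact Or.inr ⟨i - 1, j, h, by omega, rfl⟩

lemma mem_vdil {T : Finset (ℤ × ℤ)} {p : ℤ × ℤ} :
    p ∈ vdil T ↔ ((p.1, p.2) ∈ T ∨ (p.1, p.2 - 1) ∈ T) := by
  obtain ⟨i, j⟩ := p
  simp only [vdil, Finset.mem_union, Finset.mem_image, Prod.mk.injEq, Prod.exists]
  constructor
  · rintro (h | ⟨x, y, hx, h1, h2⟩)
    · exact Or.inl h
    · right
      have hx1 : x = i := by omega
      have hy1 : y = j - 1 := by omega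
      rw [hx1, hy1] at hx
      exact hx
  · rintro (h | h)
    · exact Or.inl h
    · exact Or.inr ⟨i, j - 1, h, rfl, by omega⟩

lemma coe_hdil (T : Finset (ℤ × ℤ)) :
    (↑(hdil T) : Set (ℤ × ℤ)) = ↑T ∪ sh 1 0 (↑T : Set (ℤ × ℤ)) := by
  ext ⟨i, j⟩
  simp [mem_hdil, sh]
/-! ### Consequences of 1D admissibility -/

lemma adm1_mid {A : Set ℤ} (h : Adm1 1 A) {a : ℤ} (h1 : a ∈ A) (h2 : a + 2 ∈ A) :
    a + 1 ∈ A := by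
  by_contra hm
  rcases h a (a + 2) h1 h2 (by omega)
      (fun c hc1 hc2 hc => by
        have hce : c = a + 1 := by omega
        exact hm (hce ▸ hc)) with h' | h' <;> omega

/-- In a row-admissible domain, a horizontal gap of exactly one cell in a row is
impossible. -/
lemma row_gap {T : Finset (ℤ × ℤ)} (hr : rowAdmissible T) {i j : ℤ}
    (h1 : (i - 2, j) ∈ T) (h2 : (i, j) ∈ T) : (i - 1, j) ∈ T := by
  have := adm1_mid (hr j).1 (a := i - 2) h1 (by
    have : i - 2 + 2 = i := by omega
    rw [this]; exact h2)
  have he : i - 2 + 1 = i - 1 := by omega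
  rw [he] at this
  exact this

/-- Same for the union of two consecutive rows. -/
lemma rows_gap {T : Finset (ℤ × ℤ)} (hr : rowAdmissible T) {i j : ℤ}
    (h1 : (i - 2, j - 1) ∈ T ∨ (i - 2, j) ∈ T) (h2 : (i, j - 1) ∈ T ∨ (i, j) ∈ T) :
    (i - 1, j - 1) ∈ T ∨ (i - 1, j) ∈ T := by
  have hA : Adm1 1 (row T (j - 1) ∪ row T (j - 1 + 1)) := (hr (j - 1)).2
  have hj : j - 1 + 1 = j := by omega
  rw [hj] at hA
  have h1' : (i - 2 : ℤ) ∈ row T (j - 1) ∪ row T j := by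
    rcases h1 with h | h
    · exact Or.inl h
    · exact Or.inr h
  have h2' : (i : ℤ) ∈ row T (j - 1) ∪ row T j := by
    rcases h2 with h | h
    · exact Or.inl h
    · exact Or.inr h
  have h2'' : (i - 2 + 2 : ℤ) ∈ row T (j - 1) ∪ row T j := by
    have : i - 2 + 2 = i := by omega
    rw [this]; exact h2'
  have := adm1_mid hA h1' h2''
  have he : i - 2 + 1 = i - 1 := by omega
  rw [he] at this
  rcases this with h | h
  · exact Or.inl h
  · exact Or.inr h
/-! ### Counting lemmas for the horizontal dilatation -/

lemma card_hdil (T : Finset (ℤ × ℤ)) :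
    (hdil T).card + (innerV T).ncard = 2 * T.card := by
  have h := smear (A := (↑T : Set (ℤ × ℤ))) 1 0 T.finite_toSet
  rw [← coe_hdil, ← innerV_eq, Set.ncard_coe_finset, Set.ncard_coe_finset] at h
  exact h

lemma edgesH_count (T : Finset (ℤ × ℤ)) :
    (edgesH T).ncard + (innerH T).ncard = 2 * T.card := by
  have h := smear (A := (↑T : Set (ℤ × ℤ))) 0 1 T.finite_toSet
  rw [← edgesH_eq, ← innerH_eq, Set.ncard_coe_finset] at h
  exact h

lemma edgesV_count (T : Finset (ℤ × ℤ)) :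
    (edgesV T).ncard + (innerV T).ncard = 2 * T.card := by
  have h := smear (A := (↑T : Set (ℤ × ℤ))) 1 0 T.finite_toSet
  rw [← edgesV_eq, ← innerV_eq, Set.ncard_coe_finset] at h
  exact h

/-- Under `ManifoldLike`, the "cross" set equals the smeared inner horizontal edges. -/
lemma cross_eq {T : Finset (ℤ × ℤ)} (hM : ManifoldLike T) :
    (↑(hdil T) : Set (ℤ × ℤ)) ∩ sh 0 1 ↑(hdil T) = innerH T ∪ sh 1 0 (innerH T) := by
  ext ⟨i, j⟩
  have hm := hM i j
  simp only [Set.mem_inter_iff, Set.mem_union, Set.mem_setOf_eq, sh, Finset.mem_coe,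
    mem_hdil, innerH, sub_zero] at *
  tauto

lemma innerH_hdil_eq {T : Finset (ℤ × ℤ)} (hM : ManifoldLike T) :
    innerH (hdil T) = innerH T ∪ sh 1 0 (innerH T) := by
  rw [innerH_eq, cross_eq hM]

lemma innerH_hdil_count {T : Finset (ℤ × ℤ)} (hM : ManifoldLike T) :
    (innerH (hdil T)).ncard + (innerVert T).ncard = 2 * (innerH T).ncard := by
  have h := smear (A := innerH T) 1 0 (finite_innerH T)
  rw [← innerH_hdil_eq hM, ← innerVert_eq] at h
  exact h

/-- Euler-type identity for a `ManifoldLike` domain. -/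
lemma euler_count {T : Finset (ℤ × ℤ)} (hM : ManifoldLike T) :
    (verts T).ncard + 2 * (innerH T).ncard + 2 * (innerV T).ncard
      = 4 * T.card + (innerVert T).ncard := by
  -- verts T = edgesV T ∪ sh 0 1 (edgesV T), and the intersection is the cross set
  have hv : verts T = ↑(hdil T) ∪ sh 0 1 (↑(hdil T) : Set (ℤ × ℤ)) := by
    rw [coe_hdil, ← edgesV_eq, ← verts_eq]
  have h1 := smear (A := (↑(hdil T) : Set (ℤ × ℤ))) 0 1 (hdil T).finite_toSet
  rw [← hv, cross_eq hM, Set.ncard_coe_finset] at h1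
  have h2 := smear (A := innerH T) 1 0 (finite_innerH T)
  rw [← innerVert_eq] at h2
  have h3 := card_hdil T
  omega
lemma innerV_hdil_eq {T : Finset (ℤ × ℤ)} (hr : rowAdmissible T) :
    innerV (hdil T) = sh 1 0 (↑T : Set (ℤ × ℤ)) := by
  ext ⟨i, j⟩
  simp only [innerV, Set.mem_setOf_eq, mem_hdil, sh, Finset.mem_coe, sub_zero]
  constructor
  · rintro ⟨h1 | h1, h2 | h2⟩
    · -- (i,j) ∈ T and (i-1,j) or (i-1-1,j) ∈ T
      exact h2
    · have : i - 1 - 1 = i - 2 := by omega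
      rw [this] at h2
      exact row_gap hr h2 h1
    · exact h1
    · exact h1
  · intro h
    exact ⟨Or.inr h, Or.inl h⟩

lemma innerV_hdil_count {T : Finset (ℤ × ℤ)} (hr : rowAdmissible T) :
    (innerV (hdil T)).ncard = T.card := by
  rw [innerV_hdil_eq hr, sh_ncard, Set.ncard_coe_finset]

lemma innerVert_hdil_eq {T : Finset (ℤ × ℤ)} (hr : rowAdmissible T) :
    innerVert (hdil T) = sh 1 0 (innerH T) := by
  ext ⟨i, j⟩
  simp only [innerVert, Set.mem_setOf_eq, mem_hdil, sh, innerH, sub_zero]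
  constructor
  · rintro ⟨h1, h2, h3, h4⟩
    have e : i - 1 - 1 = i - 2 := by omega
    rw [e] at h2 h4
    constructor
    · rcases h2 with h | h
      · exact h
      · rcases h1 with h1 | h1
        · exact row_gap hr h h1
        · exact h1
    · rcases h4 with h | h
      · exact h
      · rcases h3 with h3 | h3
        · exact row_gap hr h h3
        · exact h3
  · rintro ⟨h1, h2⟩
    exact ⟨Or.inr h1, Or.inl h1, Or.inr h2, Or.inl h2⟩

lemma innerVert_hdil_count {T : Finset (ℤ × ℤ)} (hr : rowAdmissible T) :
    (innerVert (hdil T)).ncard = (innerH T).ncard := by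
  rw [innerVert_hdil_eq hr, sh_ncard]

lemma verts_hdil_eq (T : Finset (ℤ × ℤ)) :
    verts (hdil T) = verts T ∪ sh 1 0 (verts T) := by
  ext ⟨i, j⟩
  simp only [verts, Set.mem_setOf_eq, Set.mem_union, mem_hdil, sh, sub_zero]
  constructor
  · intro h
    rcases h with (h | h) | (h | h) | (h | h) | (h | h) <;>
      simp only [show i - 1 - 1 = i - 2 from by omega] at * <;> tauto
  · intro h
    rcases h with (h | h | h | h) | (h | h | h | h) <;>
      simp only [show i - 1 - 1 = i - 2 from by omega] at * <;> tauto

lemma verts_inter_eq {T : Finset (ℤ × ℤ)} (hr : rowAdmissible T) :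
    verts T ∩ sh 1 0 (verts T) = sh 1 0 (edgesH T) := by
  ext ⟨i, j⟩
  simp only [Set.mem_inter_iff, verts, Set.mem_setOf_eq, sh, edgesH, sub_zero]
  constructor
  · rintro ⟨h1, h2⟩
    by_contra hc
    push_neg at hc
    obtain ⟨hc1, hc2⟩ := hc
    -- vertex (i,j) must come from column i, vertex (i-1,j) from column i-2
    have h1' : (i, j) ∈ T ∨ (i, j - 1) ∈ T := by tauto
    have h2' : (i - 1 - 1, j) ∈ T ∨ (i - 1 - 1, j - 1) ∈ T := by tauto
    have e : i - 1 - 1 = i - 2 := by omega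
    rw [e] at h2'
    have := rows_gap hr (by tauto) (by tauto)
    tauto
  · intro h
    rcases h with h | h
    · exact ⟨Or.inr (Or.inl h), Or.inl h⟩
    · exact ⟨Or.inr (Or.inr (Or.inr h)), Or.inr (Or.inr (Or.inl h))⟩

lemma verts_hdil_count {T : Finset (ℤ × ℤ)} (hr : rowAdmissible T) :
    (verts (hdil T)).ncard + (edgesH T).ncard = 2 * (verts T).ncard := by
  have h := smear (A := verts T) 1 0 (finite_verts T)
  rw [verts_inter_eq hr, sh_ncard, ← verts_hdil_eq] at h
  exact h
/-! ### Transposition -/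

/-- Transpose of a cell domain. -/
def swF (T : Finset (ℤ × ℤ)) : Finset (ℤ × ℤ) := T.image Prod.swap

lemma mem_swF {T : Finset (ℤ × ℤ)} {p : ℤ × ℤ} : p ∈ swF T ↔ (p.2, p.1) ∈ T := by
  obtain ⟨i, j⟩ := p
  simp only [swF, Finset.mem_image, Prod.exists, Prod.swap_prod_mk, Prod.mk.injEq]
  constructor
  · rintro ⟨x, y, hx, h1, h2⟩
    rw [← h1, ← h2]
    exact hx
  · intro h
    exact ⟨j, i, h, rfl, rfl⟩

lemma card_swF (T : Finset (ℤ × ℤ)) : (swF T).card = T.card :=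
  Finset.card_image_of_injective _ Prod.swap_injective

lemma ncard_swap_preimage (A : Set (ℤ × ℤ)) : (Prod.swap ⁻¹' A).ncard = A.ncard := by
  rw [← Set.image_swap_eq_preimage_swap]
  exact Set.ncard_image_of_injective _ Prod.swap_injective

lemma vdil_eq_swF (T : Finset (ℤ × ℤ)) : vdil T = swF (hdil (swF T)) := by
  ext ⟨i, j⟩
  simp only [mem_vdil, mem_swF, mem_hdil]

lemma verts_swF (T : Finset (ℤ × ℤ)) : verts (swF T) = Prod.swap ⁻¹' verts T := by
  ext ⟨i, j⟩
  simp only [verts, Set.mem_setOf_eq, Set.mem_preimage, Prod.swap_prod_mk, mem_swF]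
  tauto

lemma innerH_swF (T : Finset (ℤ × ℤ)) : innerH (swF T) = Prod.swap ⁻¹' innerV T := by
  ext ⟨i, j⟩
  simp only [innerH, innerV, Set.mem_setOf_eq, Set.mem_preimage, Prod.swap_prod_mk, mem_swF]

lemma innerV_swF (T : Finset (ℤ × ℤ)) : innerV (swF T) = Prod.swap ⁻¹' innerH T := by
  ext ⟨i, j⟩
  simp only [innerH, innerV, Set.mem_setOf_eq, Set.mem_preimage, Prod.swap_prod_mk, mem_swF]

lemma innerVert_swF (T : Finset (ℤ × ℤ)) : innerVert (swF T) = Prod.swap ⁻¹' innerVert T := by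
  ext ⟨i, j⟩
  simp only [innerVert, Set.mem_setOf_eq, Set.mem_preimage, Prod.swap_prod_mk, mem_swF]
  tauto

lemma edgesH_swF (T : Finset (ℤ × ℤ)) : edgesH (swF T) = Prod.swap ⁻¹' edgesV T := by
  ext ⟨i, j⟩
  simp only [edgesH, edgesV, Set.mem_setOf_eq, Set.mem_preimage, Prod.swap_prod_mk, mem_swF]

lemma manifoldLike_swF {T : Finset (ℤ × ℤ)} (hM : ManifoldLike T) : ManifoldLike (swF T) := by
  intro i j
  have hm := hM j i
  simp only [mem_swF] at *
  tauto

lemma rowAdmissible_swF {T : Finset (ℤ × ℤ)} (hc : colAdmissible T) :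
    rowAdmissible (swF T) := by
  intro j
  have h := hc j
  have hrow : ∀ j' : ℤ, row (swF T) j' = col T j' := by
    intro j'
    ext i
    simp only [row, col, Set.mem_setOf_eq, mem_swF]
  rw [hrow, hrow]
  exact h

/-! ### Counting lemmas for the vertical dilatation -/

lemma card_vdil (T : Finset (ℤ × ℤ)) :
    (vdil T).card + (innerH T).ncard = 2 * T.card := by
  have h := card_hdil (swF T)
  rw [card_swF] at h
  rw [vdil_eq_swF, card_swF]
  have h2 : (innerV (swF T)).ncard = (innerH T).ncard := by
    rw [innerV_swF, ncard_swap_preimage]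
  omega

lemma innerV_vdil_count {T : Finset (ℤ × ℤ)} (hM : ManifoldLike T) :
    (innerV (vdil T)).ncard + (innerVert T).ncard = 2 * (innerV T).ncard := by
  have h := innerH_hdil_count (manifoldLike_swF hM)
  rw [innerVert_swF, ncard_swap_preimage, innerH_swF, ncard_swap_preimage] at h
  rw [vdil_eq_swF, innerV_swF, ncard_swap_preimage]
  exact h

lemma innerH_vdil_count {T : Finset (ℤ × ℤ)} (hc : colAdmissible T) :
    (innerH (vdil T)).ncard = T.card := by
  have h := innerV_hdil_count (rowAdmissible_swF hc)
  rw [card_swF] at h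
  rw [vdil_eq_swF, innerH_swF, ncard_swap_preimage]
  exact h

lemma innerVert_vdil_count {T : Finset (ℤ × ℤ)} (hc : colAdmissible T) :
    (innerVert (vdil T)).ncard = (innerV T).ncard := by
  have h := innerVert_hdil_count (rowAdmissible_swF hc)
  rw [innerH_swF, ncard_swap_preimage] at h
  rw [vdil_eq_swF, innerVert_swF, ncard_swap_preimage]
  exact h

lemma verts_vdil_count {T : Finset (ℤ × ℤ)} (hc : colAdmissible T) :
    (verts (vdil T)).ncard + (edgesV T).ncard = 2 * (verts T).ncard := by
  have h := verts_hdil_count (rowAdmissible_swF hc)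
  rw [edgesH_swF, ncard_swap_preimage, verts_swF, ncard_swap_preimage] at h
  rw [vdil_eq_swF, verts_swF, ncard_swap_preimage]
  exact h
/-! ### The master induction -/

lemma dil_zero (S : Finset (ℤ × ℤ)) : dil S 0 0 = S := by
  simp [dil]

lemma dil_succ_h (S : Finset (ℤ × ℤ)) (k₁ k₂ : ℕ) :
    dil S (k₁ + 1) k₂ = hdil (dil S k₁ k₂) := by
  simp [dil, Function.iterate_succ_apply']

lemma dil_succ_v (S : Finset (ℤ × ℤ)) (k₂ : ℕ) :
    dil S 0 (k₂ + 1) = vdil (dil S 0 k₂) := by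
  simp [dil, Function.iterate_succ_apply']

lemma master : ∀ (k₁ k₂ : ℕ) (S : Finset (ℤ × ℤ)), A2 k₁ k₂ S →
    (((dil S k₁ k₂).card : ℤ)
        = (k₁ + 1) * (k₂ + 1) * S.card - (k₁ + 1) * k₂ * (innerH S).ncard
          - k₁ * (k₂ + 1) * (innerV S).ncard + k₁ * k₂ * (innerVert S).ncard)
    ∧ (((innerH (dil S k₁ k₂)).ncard : ℤ)
        = (k₁ + 1) * (k₂ * S.card - (k₂ - 1) * (innerH S).ncard)
          - k₁ * (k₂ * (innerV S).ncard - (k₂ - 1) * (innerVert S).ncard))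
    ∧ (((innerV (dil S k₁ k₂)).ncard : ℤ)
        = k₁ * ((k₂ + 1) * S.card - k₂ * (innerH S).ncard)
          - (k₁ - 1) * ((k₂ + 1) * (innerV S).ncard - k₂ * (innerVert S).ncard))
    ∧ (((innerVert (dil S k₁ k₂)).ncard : ℤ)
        = k₁ * (k₂ * S.card - (k₂ - 1) * (innerH S).ncard)
          - (k₁ - 1) * (k₂ * (innerV S).ncard - (k₂ - 1) * (innerVert S).ncard))
    ∧ (((verts (dil S k₁ k₂)).ncard : ℤ)
        = (k₁ + 2) * (k₂ + 2) * S.card - (k₁ + 2) * (k₂ + 1) * (innerH S).ncard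
          - (k₁ + 1) * (k₂ + 2) * (innerV S).ncard
          + (k₁ + 1) * (k₂ + 1) * (innerVert S).ncard) := by
  intro k₁
  induction k₁ with
  | zero =>
    intro k₂
    induction k₂ with
    | zero =>
      intro S hS
      have hM : ManifoldLike S := by simp only [A2] at hS; exact hS
      have he := euler_count hM
      rw [dil_zero]
      refine ⟨by push_cast; ring, by push_cast; ring, by push_cast; ring,
        by push_cast; ring, ?_⟩
      push_cast
      push_cast at he
      linarith
    | succ m ihm =>
      intro S hS
      obtain ⟨hS0, hMT, hcT⟩ : A2 0 m S ∧ ManifoldLike (dil S 0 m) ∧ colAdmissible (dil S 0 m) := by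
        simp only [A2, A201] at hS
        exact ⟨hS.1, hS.2.1, hS.2.2⟩
      obtain ⟨hF, hH, hV, hQ, hN⟩ := ihm S hS0
      set T := dil S 0 m with hT
      have eF : ((vdil T).card : ℤ) = 2 * T.card - (innerH T).ncard := by
        have := card_vdil T; omega
      have eH : ((innerH (vdil T)).ncard : ℤ) = T.card := by
        have := innerH_vdil_count hcT; omega
      have eV : ((innerV (vdil T)).ncard : ℤ)
          = 2 * (innerV T).ncard - (innerVert T).ncard := by
        have := innerV_vdil_count hMT; omega
      have eQ : ((innerVert (vdil T)).ncard : ℤ) = (innerV T).ncard := by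
        have := innerVert_vdil_count hcT; omega
      have eN : ((verts (vdil T)).ncard : ℤ)
          = 2 * (verts T).ncard - (2 * T.card - (innerV T).ncard) := by
        have := verts_vdil_count hcT; have := edgesV_count T; omega
      rw [dil_succ_v]
      refine ⟨?_, ?_, ?_, ?_, ?_⟩
      · rw [eF, hF, hH]; push_cast; ring
      · rw [eH, hF]; push_cast; ring
      · rw [eV, hV, hQ]; push_cast; ring
      · rw [eQ, hV]; push_cast; ring
      · rw [eN, hN, hF, hV]; push_cast; ring
  | succ m ihm =>
    intro k₂ S hS
    obtain ⟨hS0, hMT, hrT⟩ : A2 m k₂ S ∧ ManifoldLike (dil S m k₂) ∧ rowAdmissible (dil S m k₂) := by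
      simp only [A2, A210] at hS
      exact ⟨hS.1, hS.2.1, hS.2.2⟩
    obtain ⟨hF, hH, hV, hQ, hN⟩ := ihm k₂ S hS0
    set T := dil S m k₂ with hT
    have eF : ((hdil T).card : ℤ) = 2 * T.card - (innerV T).ncard := by
      have := card_hdil T; omega
    have eH : ((innerH (hdil T)).ncard : ℤ)
        = 2 * (innerH T).ncard - (innerVert T).ncard := by
      have := innerH_hdil_count hMT; omega
    have eV : ((innerV (hdil T)).ncard : ℤ) = T.card := by
      have := innerV_hdil_count hrT; omega
    have eQ : ((innerVert (hdil T)).ncard : ℤ) = (innerH T).ncard := by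
      have := innerVert_hdil_count hrT; omega
    have eN : ((verts (hdil T)).ncard : ℤ)
        = 2 * (verts T).ncard - (2 * T.card - (innerH T).ncard) := by
      have := verts_hdil_count hrT; have := edgesH_count T; omega
    rw [dil_succ_h]
    refine ⟨?_, ?_, ?_, ?_, ?_⟩
    · rw [eF, hF, hV]; push_cast; ring
    · rw [eH, hH, hQ]; push_cast; ring
    · rw [eV, hF]; push_cast; ring
    · rw [eQ, hH]; push_cast; ring
    · rw [eN, hN, hF, hH]; push_cast; ring

/-- Number of vertices of the dilatation `Ω^e_{k₁,k₂}` of an `A²_{k₁,k₂}` domain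
(stated additively):
`f₀ₖ = (k₁+2)(k₂+2)f₂ − (k₁+2)(k₂+1)f₁ʰ⁰ − (k₂+2)(k₁+1)f₁ᵛ⁰ + (k₁+1)(k₂+1)f₀⁰`. -/
theorem stmt9 (k₁ k₂ : ℕ) (S : Finset (ℤ × ℤ)) (hS : A2 k₁ k₂ S) :
    (verts (dil S k₁ k₂)).ncard + (k₁ + 2) * (k₂ + 1) * (innerH S).ncard
        + (k₂ + 2) * (k₁ + 1) * (innerV S).ncard
      = (k₁ + 2) * (k₂ + 2) * S.card + (k₁ + 1) * (k₂ + 1) * (innerVert S).ncard := by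
  obtain ⟨-, -, -, -, hN⟩ := master k₁ k₂ S hS
  zify
  linear_combination hN
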